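/- arXiv:2601.22073 — 3 statements merged into one kernel-verified Lean document; each statement's English description precedes it below -/
import Mathlib

section
/- Let f ∈ L¹(0,T) and g ∈ L^∞(0,T) be real-valued, g₀ ∈ ℝ. Suppose that for all nonnegative φ ∈ C¹_c([0,T)) one has −∫₀ᵀ φ'(τ) g(τ) dτ + ∫₀ᵀ φ(τ) f(τ) dτ − φ(0) g₀ ≤ 0. Then for almost every s < t in (0,T) (and also for s = 0 with g(s) replaced by g₀) it holds g(t) − g(s) + ∫ₛᵗ f(τ) dτ ≤ 0. -/
open MeasureTheory Real Set Filter Topology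

/-!
Test the inequality with `σ_s - σ_t` and with `1 - σ_t`, where `σ_a` is a smooth step rising
from `0` to `1` on `[a, a + ε]`. The derivative of `σ_a` has unit mass on `[a, a + ε]` and height
`O(1/ε)`, so `∫ σ_a' g → g(a)` at every Lebesgue point `a` of `g` (Lebesgue differentiation), while
`σ_a → 𝟙_(a, ∞)` pointwise and dominated convergence handles the `f` terms. The good set `S` is
the set of points of `(0, T)` where the first limit holds.
-/

theorem deriv_smoothTransition_eq_zero {x : ℝ} (hx : x ∉ Icc 0 1) :
    deriv smoothTransition x = 0 := by
  have hconst : smoothTransition =ᶠ[𝓝 x] fun _ => if 1 < x then 1 else 0 := by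
    rcases not_and_or.mp hx with hx | hx <;> rw [not_le] at hx
    · filter_upwards [Iio_mem_nhds hx] with y hy
      rw [smoothTransition.zero_of_nonpos hy.le, if_neg (by linarith)]
    · filter_upwards [Ioi_mem_nhds hx] with y hy
      rw [smoothTransition.one_of_one_le hy.le, if_pos hx]
  rw [hconst.deriv_eq, deriv_const]

theorem exists_abs_deriv_smoothTransition_le : ∃ C, ∀ x, |deriv smoothTransition x| ≤ C :=
  (HasCompactSupport.intro isCompact_Icc fun _ ↦ deriv_smoothTransition_eq_zero)
    |>.exists_bound_of_continuous (smoothTransition.contDiff.continuous_deriv le_rfl)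

noncomputable def smoothStep (a ε τ : ℝ) : ℝ := smoothTransition ((τ - a) / ε)

namespace smoothStep

variable {a ε τ : ℝ}

protected theorem contDiff {n : ℕ∞} : ContDiff ℝ n (smoothStep a ε) :=
  smoothTransition.contDiff.comp ((contDiff_id.sub contDiff_const).div_const ε)

theorem nonneg : 0 ≤ smoothStep a ε τ := smoothTransition.nonneg _

theorem le_one : smoothStep a ε τ ≤ 1 := smoothTransition.le_one _

theorem eq_zero_of_le (hε : 0 ≤ ε) (hτ : τ ≤ a) : smoothStep a ε τ = 0 :=
  smoothTransition.zero_of_nonpos (div_nonpos_of_nonpos_of_nonneg (by linarith) hε)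

theorem eq_one_of_le (hε : 0 < ε) (hτ : a + ε ≤ τ) : smoothStep a ε τ = 1 :=
  smoothTransition.one_of_one_le ((one_le_div hε).mpr (by linarith))

theorem antitone_left {s t : ℝ} (hst : s ≤ t) (hε : 0 ≤ ε) :
    smoothStep t ε τ ≤ smoothStep s ε τ :=
  smoothTransition.monotone (div_le_div_of_nonneg_right (by linarith) hε)

theorem tendsto_indicator_Ioi (a τ : ℝ) :
    Tendsto (fun ε ↦ smoothStep a ε τ) (𝓝[>] 0) (𝓝 ((Ioi a).indicator 1 τ)) := by
  rcases le_or_gt τ a with hτ | hτ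
  · rw [indicator_of_notMem (show τ ∉ Ioi a from not_lt.mpr hτ)]
    refine tendsto_const_nhds.congr' ?_
    filter_upwards [self_mem_nhdsWithin] with ε hε
    exact (eq_zero_of_le (le_of_lt hε) hτ).symm
  · rw [indicator_of_mem (show τ ∈ Ioi a from hτ), Pi.one_apply]
    refine tendsto_const_nhds.congr' ?_
    filter_upwards [Ioo_mem_nhdsGT (sub_pos.mpr hτ)] with ε hε
    exact (eq_one_of_le hε.1 (by linarith [hε.2])).symm

theorem hasDerivAt (a ε τ : ℝ) :
    HasDerivAt (smoothStep a ε) (deriv smoothTransition ((τ - a) / ε) / ε) τ := by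
  have hinner : HasDerivAt (fun τ : ℝ ↦ (τ - a) / ε) (1 / ε) τ :=
    ((hasDerivAt_id τ).sub_const a).div_const ε
  have h := ((smoothTransition.contDiff (n := 1)).differentiable one_ne_zero _).hasDerivAt.comp
    τ hinner
  rw [mul_one_div] at h
  exact h

theorem support_deriv_subset (a : ℝ) (hε : 0 < ε) :
    Function.support (deriv (smoothStep a ε)) ⊆ Icc a (a + ε) := by
  intro τ hτ
  by_contra hmem
  refine hτ ?_
  rw [(hasDerivAt a ε τ).deriv, deriv_smoothTransition_eq_zero, zero_div]
  rwa [mem_Icc, le_div_iff₀ hε, div_le_iff₀ hε, zero_mul, one_mul, sub_nonneg, sub_le_iff_le_add',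
    ← mem_Icc]

theorem abs_deriv_le {C : ℝ} (hC : ∀ x, |deriv smoothTransition x| ≤ C) (a : ℝ) (hε : 0 < ε)
    (τ : ℝ) : |deriv (smoothStep a ε) τ| ≤ C / ε := by
  rw [(hasDerivAt a ε τ).deriv, abs_div, abs_of_pos hε]
  exact div_le_div_of_nonneg_right (hC _) hε.le

theorem continuous_deriv (a ε : ℝ) : Continuous (deriv (smoothStep a ε)) :=
  smoothStep.contDiff.continuous_deriv le_rfl

theorem integral_deriv (a : ℝ) (hε : 0 < ε) : ∫ τ, deriv (smoothStep a ε) τ = 1 := by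
  have hsupp : Function.support (deriv (smoothStep a ε)) ⊆ Ioc (a - ε) (a + ε) :=
    (support_deriv_subset a hε).trans
      (Icc_subset_Ioc_iff (by linarith) |>.mpr ⟨by linarith, le_rfl⟩)
  rw [← intervalIntegral.integral_eq_integral_of_support_subset hsupp,
    intervalIntegral.integral_deriv_eq_sub (fun τ _ ↦ (hasDerivAt a ε τ).differentiableAt)
      ((continuous_deriv a ε).intervalIntegrable _ _),
    eq_one_of_le hε le_rfl, eq_zero_of_le hε.le (by linarith), sub_zero]

theorem integrableOn_deriv_mul {U : Set ℝ} {g : ℝ → ℝ} (hg : IntegrableOn g U) (a : ℝ)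
    (hε : 0 < ε) : IntegrableOn (fun τ ↦ deriv (smoothStep a ε) τ * g τ) U := by
  obtain ⟨C, hC⟩ := exists_abs_deriv_smoothTransition_le
  exact hg.bdd_mul (continuous_deriv a ε).aestronglyMeasurable
    (Eventually.of_forall (abs_deriv_le hC a hε))

theorem integrable_mul {μ : Measure ℝ} {f : ℝ → ℝ} (hf : Integrable f μ) (a ε : ℝ) :
    Integrable (fun τ ↦ smoothStep a ε τ * f τ) μ :=
  hf.bdd_mul (smoothStep.contDiff (n := 0)).continuous.aestronglyMeasurable
    (Eventually.of_forall fun _ ↦ by rw [Real.norm_of_nonneg nonneg]; exact le_one)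

theorem tendsto_integral_mul {μ : Measure ℝ} {f : ℝ → ℝ} (hf : Integrable f μ) (a : ℝ) :
    Tendsto (fun ε ↦ ∫ τ, smoothStep a ε τ * f τ ∂μ) (𝓝[>] 0) (𝓝 (∫ τ in Ioi a, f τ ∂μ)) := by
  rw [← integral_indicator measurableSet_Ioi]
  refine tendsto_integral_filter_of_dominated_convergence (fun τ ↦ ‖f τ‖)
    (Eventually.of_forall fun ε ↦ (integrable_mul hf a ε).aestronglyMeasurable)
    (Eventually.of_forall fun ε ↦ Eventually.of_forall fun τ ↦ ?_) hf.norm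
    (Eventually.of_forall fun τ ↦ ?_)
  · rw [norm_mul, Real.norm_of_nonneg nonneg]
    exact mul_le_of_le_one_left (norm_nonneg _) le_one
  · convert (tendsto_indicator_Ioi a τ).mul_const (f τ) using 2
    by_cases hτ : τ ∈ Ioi a <;> simp [hτ]

theorem ae_tendsto_setIntegral_deriv_mul {U : Set ℝ} (hU : MeasurableSet U) {g : ℝ → ℝ}
    (hg : IntegrableOn g U) :
    ∀ᵐ x ∂(volume.restrict U),
      Tendsto (fun ε ↦ ∫ τ in U, deriv (smoothStep x ε) τ * g τ) (𝓝[>] 0) (𝓝 (g x)) := by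
  obtain ⟨C, hC⟩ := exists_abs_deriv_smoothTransition_le
  set G := U.indicator g
  have hG : Integrable G := (integrable_indicator_iff hU).mpr hg
  have hU_eq : ∀ x ε, ∫ τ in U, deriv (smoothStep x ε) τ * g τ
      = ∫ τ, deriv (smoothStep x ε) τ • G τ := fun x ε ↦ by
    simp_rw [← integral_indicator hU, smul_eq_mul, G, indicator_mul_right]
  rw [ae_restrict_iff' hU]
  filter_upwards
    [IsUnifLocDoublingMeasure.ae_tendsto_average_norm_sub volume hG.locallyIntegrable 1]
    with x hx hxU
  have hGx : G x = g x := indicator_of_mem hxU g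
  simp_rw [hU_eq, ← hGx]
  refine tendsto_integral_smul_of_tendsto_average_norm_sub (2 * C)
    (hx (fun _ ↦ x) (fun ε ↦ ε) tendsto_id ?_) ?_ ?_ ?_ ?_
  · filter_upwards [self_mem_nhdsWithin] with ε hε
    simpa using hε.le
  · exact Eventually.of_forall fun ε ↦ hG.integrableOn
  · refine tendsto_const_nhds.congr' ?_
    filter_upwards [self_mem_nhdsWithin] with ε hε
    exact (integral_deriv x hε).symm
  · filter_upwards [self_mem_nhdsWithin] with ε hε
    refine (support_deriv_subset x hε).trans ?_
    rw [Real.closedBall_eq_Icc]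
    exact Icc_subset_Icc (by linarith [hε.out]) le_rfl
  · filter_upwards [self_mem_nhdsWithin] with ε hε τ
    rw [Real.volume_real_closedBall hε.out.le, mul_div_mul_left _ _ two_ne_zero]
    exact abs_deriv_le hC x hε τ

end smoothStep

theorem setIntegral_Ioi_sub_setIntegral_Ioi {T s t : ℝ} {f : ℝ → ℝ}
    (hf : IntegrableOn f (Ioo 0 T)) (hs : 0 ≤ s) (hst : s ≤ t) (ht : t < T) :
    ∫ τ in Ioi s, f τ ∂(volume.restrict (Ioo 0 T)) - ∫ τ in Ioi t, f τ ∂(volume.restrict (Ioo 0 T))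
      = ∫ τ in Ioo s t, f τ := by
  have hf' : Integrable f (volume.restrict (Ioo 0 T)) := hf
  rw [← Ioc_union_Ioi_eq_Ioi hst, setIntegral_union Ioc_disjoint_Ioi_same measurableSet_Ioi
    hf'.integrableOn hf'.integrableOn, add_sub_cancel_right,
    Measure.restrict_restrict measurableSet_Ioc,
    inter_eq_left.mpr (Ioc_subset_Ioo_right ht |>.trans (Ioo_subset_Ioo_left hs)),
    integral_Ioc_eq_integral_Ioo]

/-- The weak form of `g' + f ≤ 0` on `(0, T)` with `g(0) ≤ g₀`. -/
def IsWeakSubsolution (T g₀ : ℝ) (f g : ℝ → ℝ) : Prop :=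
  ∀ φ : ℝ → ℝ, ContDiff ℝ 1 φ → (∀ t, 0 ≤ φ t) → (∃ T', T' < T ∧ ∀ t, T' ≤ t → φ t = 0) →
    -(∫ t in Ioo 0 T, deriv φ t * g t) + (∫ t in Ioo 0 T, φ t * f t) - φ 0 * g₀ ≤ 0

namespace IsWeakSubsolution

variable {T g₀ : ℝ} {f g : ℝ → ℝ}

theorem sub_add_integral_nonpos (h : IsWeakSubsolution T g₀ f g) (hf : IntegrableOn f (Ioo 0 T))
    (hg : IntegrableOn g (Ioo 0 T)) {s t : ℝ} (hs : 0 ≤ s) (hst : s ≤ t) (ht : t < T)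
    (hgs : Tendsto (fun ε ↦ ∫ τ in Ioo 0 T, deriv (smoothStep s ε) τ * g τ) (𝓝[>] 0) (𝓝 (g s)))
    (hgt : Tendsto (fun ε ↦ ∫ τ in Ioo 0 T, deriv (smoothStep t ε) τ * g τ) (𝓝[>] 0) (𝓝 (g t))) :
    g t - g s + ∫ τ in Ioo s t, f τ ≤ 0 := by
  set μ := volume.restrict (Ioo 0 T)
  have hlim := (hgs.sub hgt).neg.add
    ((smoothStep.tendsto_integral_mul hf s).sub (smoothStep.tendsto_integral_mul hf t))
  have hineq : ∀ᶠ ε in 𝓝[>] 0,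
      -((∫ τ in Ioo 0 T, deriv (smoothStep s ε) τ * g τ)
        - ∫ τ in Ioo 0 T, deriv (smoothStep t ε) τ * g τ)
      + ((∫ τ, smoothStep s ε τ * f τ ∂μ) - ∫ τ, smoothStep t ε τ * f τ ∂μ) ≤ 0 := by
    filter_upwards [Ioo_mem_nhdsGT (sub_pos.mpr ht)] with ε ⟨hε, hεT⟩
    have htest := h (fun τ ↦ smoothStep s ε τ - smoothStep t ε τ)
      (smoothStep.contDiff.sub smoothStep.contDiff)
      (fun τ ↦ sub_nonneg.mpr (smoothStep.antitone_left hst hε.le))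
      ⟨t + ε, by linarith, fun τ hτ ↦ by
        rw [smoothStep.eq_one_of_le hε (by linarith), smoothStep.eq_one_of_le hε hτ, sub_self]⟩
    have hderiv (τ : ℝ) : deriv (fun τ ↦ smoothStep s ε τ - smoothStep t ε τ) τ
        = deriv (smoothStep s ε) τ - deriv (smoothStep t ε) τ :=
      deriv_fun_sub (smoothStep.hasDerivAt s ε τ).differentiableAt
        (smoothStep.hasDerivAt t ε τ).differentiableAt
    simp_rw [hderiv, sub_mul] at htest
    rw [integral_sub (smoothStep.integrableOn_deriv_mul hg s hε)
        (smoothStep.integrableOn_deriv_mul hg t hε),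
      integral_sub (smoothStep.integrable_mul hf s ε) (smoothStep.integrable_mul hf t ε),
      smoothStep.eq_zero_of_le hε.le hs, smoothStep.eq_zero_of_le hε.le (hs.trans hst)] at htest
    linarith
  have := le_of_tendsto hlim hineq
  rw [setIntegral_Ioi_sub_setIntegral_Ioi hf hs hst ht] at this
  linarith

theorem sub_initial_add_integral_nonpos (h : IsWeakSubsolution T g₀ f g)
    (hf : IntegrableOn f (Ioo 0 T)) {t : ℝ} (ht₀ : 0 ≤ t) (ht : t < T)
    (hgt : Tendsto (fun ε ↦ ∫ τ in Ioo 0 T, deriv (smoothStep t ε) τ * g τ) (𝓝[>] 0) (𝓝 (g t))) :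
    g t - g₀ + ∫ τ in Ioo 0 t, f τ ≤ 0 := by
  set μ := volume.restrict (Ioo 0 T)
  have hlim := (hgt.add ((tendsto_const_nhds (x := ∫ τ, f τ ∂μ)).sub
    (smoothStep.tendsto_integral_mul hf t))).sub_const g₀
  have hineq : ∀ᶠ ε in 𝓝[>] 0,
      (∫ τ in Ioo 0 T, deriv (smoothStep t ε) τ * g τ)
      + ((∫ τ, f τ ∂μ) - ∫ τ, smoothStep t ε τ * f τ ∂μ) - g₀ ≤ 0 := by
    filter_upwards [Ioo_mem_nhdsGT (sub_pos.mpr ht)] with ε ⟨hε, hεT⟩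
    have htest := h (fun τ ↦ 1 - smoothStep t ε τ) (contDiff_const.sub smoothStep.contDiff)
      (fun τ ↦ sub_nonneg.mpr smoothStep.le_one)
      ⟨t + ε, by linarith, fun τ hτ ↦ by rw [smoothStep.eq_one_of_le hε hτ, sub_self]⟩
    simp_rw [deriv_const_sub, neg_mul, sub_mul, one_mul] at htest
    rw [integral_neg, neg_neg, integral_sub hf (smoothStep.integrable_mul hf t ε),
      smoothStep.eq_zero_of_le hε.le ht₀] at htest
    linarith
  have := le_of_tendsto hlim hineq
  have hwhole : ∫ τ, f τ ∂μ = ∫ τ in Ioi 0, f τ ∂μ := by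
    rw [Measure.restrict_restrict measurableSet_Ioi, Ioi_inter_Ioo, max_self]
  rw [hwhole, setIntegral_Ioi_sub_setIntegral_Ioi hf le_rfl ht₀ ht] at this
  linarith

end IsWeakSubsolution

theorem stmt6_general (T : ℝ) (f g : ℝ → ℝ) (g₀ : ℝ)
    (hf : IntegrableOn f (Set.Ioo 0 T))
    (M : ℝ) (hgb : ∀ᵐ t ∂(volume.restrict (Set.Ioo 0 T)), |g t| ≤ M)
    (hgm : AEStronglyMeasurable g (volume.restrict (Set.Ioo 0 T)))
    (h : ∀ φ : ℝ → ℝ, ContDiff ℝ 1 φ → (∀ t, 0 ≤ φ t) →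
      (∃ T', T' < T ∧ ∀ t, T' ≤ t → φ t = 0) →
      -(∫ t in Set.Ioo 0 T, deriv φ t * g t) + (∫ t in Set.Ioo 0 T, φ t * f t)
        - φ 0 * g₀ ≤ 0) :
    ∃ S : Set ℝ, S ⊆ Set.Ioo 0 T ∧ volume (Set.Ioo 0 T \ S) = 0 ∧
      (∀ s ∈ S, ∀ t ∈ S, s < t → g t - g s + ∫ τ in Set.Ioo s t, f τ ≤ 0) ∧
      (∀ t ∈ S, g t - g₀ + ∫ τ in Set.Ioo 0 t, f τ ≤ 0) := by
  have : IsFiniteMeasure (volume.restrict (Ioo 0 T)) :=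
    isFiniteMeasure_restrict.mpr measure_Ioo_lt_top.ne
  have hg : IntegrableOn g (Ioo 0 T) := Integrable.of_bound hgm M hgb
  set S := {x | x ∈ Ioo 0 T ∧
    Tendsto (fun ε ↦ ∫ τ in Ioo 0 T, deriv (smoothStep x ε) τ * g τ) (𝓝[>] 0) (𝓝 (g x))}
  refine ⟨S, fun x hx ↦ hx.1, ?_, ?_, ?_⟩
  · have hae := smoothStep.ae_tendsto_setIntegral_deriv_mul measurableSet_Ioo hg
    rw [ae_restrict_iff' measurableSet_Ioo] at hae
    refine measure_mono_null ?_ (ae_iff.mp hae)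
    exact fun x hx hlim ↦ hx.2 ⟨hx.1, hlim hx.1⟩
  · rintro s ⟨hs, hgs⟩ t ⟨ht, hgt⟩ hst
    exact IsWeakSubsolution.sub_add_integral_nonpos h hf hg hs.1.le hst.le ht.2 hgs hgt
  · rintro t ⟨ht, hgt⟩
    exact IsWeakSubsolution.sub_initial_add_integral_nonpos h hf ht.1.le ht.2 hgt

/-- Deterministic Lemma 2.1, direction i ⇒ ii: if the variational inequality
`-∫ φ' g + ∫ φ f - φ(0) g₀ ≤ 0` holds for all nonnegative `φ ∈ C¹_c([0,T))`, then for
almost every `s < t` in `(0,T)` (and for `s = 0` with `g(0)` replaced by `g₀`) one has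
`g(t) - g(s) + ∫ₛᵗ f ≤ 0`. -/
theorem stmt6 (T : ℝ) (hT : 0 < T) (f g : ℝ → ℝ) (g₀ : ℝ)
    (hf : IntegrableOn f (Set.Ioo 0 T))
    (M : ℝ) (hgb : ∀ᵐ t ∂(volume.restrict (Set.Ioo 0 T)), |g t| ≤ M)
    (hgm : AEStronglyMeasurable g (volume.restrict (Set.Ioo 0 T)))
    (h : ∀ φ : ℝ → ℝ, ContDiff ℝ 1 φ → (∀ t, 0 ≤ φ t) →
      (∃ T', T' < T ∧ ∀ t, T' ≤ t → φ t = 0) →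
      -(∫ t in Set.Ioo 0 T, deriv φ t * g t) + (∫ t in Set.Ioo 0 T, φ t * f t)
        - φ 0 * g₀ ≤ 0) :
    ∃ S : Set ℝ, S ⊆ Set.Ioo 0 T ∧ volume (Set.Ioo 0 T \ S) = 0 ∧
      (∀ s ∈ S, ∀ t ∈ S, s < t → g t - g s + ∫ τ in Set.Ioo s t, f τ ≤ 0) ∧
      (∀ t ∈ S, g t - g₀ + ∫ τ in Set.Ioo 0 t, f τ ≤ 0) :=
  stmt6_general T f g g₀ hf M hgb hgm h
end

section
/- Let f ∈ L¹(0,T) and g ∈ L^∞(0,T), g₀ ∈ ℝ. Suppose g(t) − g(s) + ∫ₛᵗ f(τ) dτ ≤ 0 holds for almost every 0 < s < t < T and also for s = 0 with g(0) replaced by g₀. Then for all nonnegative φ ∈ C¹_c([0,T)): −∫₀ᵀ φ'(τ) g(τ) dτ + ∫₀ᵀ φ(τ) f(τ) dτ − φ(0) g₀ ≤ 0. -/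
open MeasureTheory Set intervalIntegral

/-! Put `F t = ∫₀ᵗ f`. The hypotheses say that `K := g₀ - g - F` is nonnegative and nondecreasing
on a subset of full measure of `(0, T)`; extending it to a monotone function on `ℝ` gives
`g = g₀ - K - F` almost everywhere. Tested against `φ'`, the constant contributes `-φ 0 * g₀`, the
primitive contributes `-∫ φ f` (integration by parts for absolutely continuous functions), and
`∫ φ' K ≤ 0`: by the layer-cake formula `∫ φ' K` is an integral over `λ > 0` of `∫_{K > λ} φ'`,
and each superlevel set `{K > λ}` of the monotone `K` is a terminal subinterval `(c, T)` of
`(0, T)`, over which `φ'` integrates to `-φ c ≤ 0`. -/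

theorem ContDiff.integral_deriv_eq_sub {φ : ℝ → ℝ} (hφ : ContDiff ℝ 1 φ) (a b : ℝ) :
    ∫ t in a..b, deriv φ t = φ b - φ a :=
  intervalIntegral.integral_deriv_eq_sub (fun x _ => hφ.differentiable one_ne_zero x)
    ((hφ.continuous_deriv le_rfl).intervalIntegrable _ _)

theorem integral_deriv_mul_primitive {φ f : ℝ → ℝ} {a b : ℝ} (hφ : ContDiff ℝ 1 φ)
    (hf : IntervalIntegrable f volume a b) :
    ∫ t in a..b, deriv φ t * ∫ τ in a..t, f τ
      = φ b * (∫ τ in a..b, f τ) - ∫ t in a..b, φ t * f t := by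
  have hparts := hφ.contDiffOn.absolutelyContinuousOnInterval.integral_mul_deriv_eq_deriv_mul
    (hf.absolutelyContinuousOnInterval_intervalIntegral (c := a) left_mem_uIcc)
  have hderiv : ∫ t in a..b, φ t * deriv (fun x => ∫ τ in a..x, f τ) t
      = ∫ t in a..b, φ t * f t := by
    refine integral_congr_ae ?_
    filter_upwards [hf.ae_hasDerivAt_integral] with t ht htI
    rw [(ht (uIoc_subset_uIcc htI) a left_mem_uIcc).deriv]
  rw [hderiv, integral_same, mul_zero, sub_zero] at hparts
  linarith

theorem setIntegral_Ioc_inter_deriv_nonpos {φ : ℝ → ℝ} {a b : ℝ} {s : Set ℝ}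
    (hs : IsUpperSet s) (hφ : ContDiff ℝ 1 φ) (hφ0 : ∀ t ∈ Icc a b, 0 ≤ φ t) (hφb : φ b = 0) :
    ∫ t in Ioc a b ∩ s, deriv φ t ≤ 0 := by
  set U := Ioc a b ∩ s
  rcases U.eq_empty_or_nonempty with hU | hU
  · simp [hU]
  have hbdd : BddBelow U := ⟨a, fun t ht => ht.1.1.le⟩
  set c := sInf U
  have hac : a ≤ c := le_csInf hU fun t ht => ht.1.1.le
  have hcb : c ≤ b := let ⟨u, hu⟩ := hU; (csInf_le hbdd hu).trans hu.1.2
  have hUc : U =ᵐ[volume] Ioc c b := by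
    refine ae_eq_set.2 ⟨measure_mono_null (fun t ht => ?_) (measure_singleton c), ?_⟩
    · exact le_antisymm (not_lt.1 fun hct => ht.2 ⟨hct, ht.1.1.2⟩) (csInf_le hbdd ht.1)
    · refine sdiff_eq_empty.2 (fun t ht => ?_) ▸ measure_empty
      obtain ⟨u, hu, hut⟩ := (csInf_lt_iff hbdd hU).1 ht.1
      exact ⟨⟨hac.trans_lt ht.1, ht.2⟩, hs hut.le hu.2⟩
  rw [setIntegral_congr_set hUc, ← integral_of_le hcb, hφ.integral_deriv_eq_sub, hφb]
  linarith [hφ0 c ⟨hac, hcb⟩]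

theorem integral_deriv_mul_nonpos_of_monotone {φ K : ℝ → ℝ} {a b : ℝ} (hab : a ≤ b)
    (hφ : ContDiff ℝ 1 φ) (hφ0 : ∀ t ∈ Icc a b, 0 ≤ φ t) (hφb : φ b = 0)
    (hK : Monotone K) (hK0 : ∀ᵐ t ∂(volume.restrict (Ioc a b)), 0 ≤ K t) :
    ∫ t in a..b, deriv φ t * K t ≤ 0 := by
  have hφ' : Continuous (deriv φ) := hφ.continuous_deriv le_rfl
  obtain ⟨C, hC⟩ := isCompact_Icc.exists_bound_of_continuousOn hφ'.continuousOn (s := Icc a b)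
  have hlt : MeasurableSet {p : ℝ × ℝ | p.2 < K p.1} :=
    measurableSet_lt measurable_snd (hK.measurable.comp measurable_fst)
  set μ := volume.restrict (Ioc a b) with hμ
  set ν := volume.restrict (Ioo 0 (K b)) with hν
  set Φ : ℝ × ℝ → ℝ := {p | p.2 < K p.1}.indicator fun p => deriv φ p.1
  have hΦ : Integrable Φ (μ.prod ν) := by
    refine (integrable_const C).mono' (hφ'.aestronglyMeasurable.comp_fst.indicator hlt) ?_
    have hmem : ∀ᵐ p ∂(μ.prod ν), p.1 ∈ Ioc a b := by
      rw [hμ, hν, Measure.prod_restrict]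
      filter_upwards [ae_restrict_mem (measurableSet_Ioc.prod measurableSet_Ioo)] with p hp
      exact hp.1
    filter_upwards [hmem] with p hp
    exact (norm_indicator_le_norm_self _ _).trans (hC p.1 (Ioc_subset_Icc_self hp))
  have hinner : ∀ᵐ t ∂μ, ∫ l, Φ (t, l) ∂ν = deriv φ t * K t := by
    filter_upwards [hK0, ae_restrict_mem measurableSet_Ioc] with t ht0 ht
    have hΦt : (fun l => Φ (t, l)) = (Iio (K t)).indicator fun _ => deriv φ t := rfl
    rw [hΦt, MeasureTheory.integral_indicator measurableSet_Iio,
      Measure.restrict_restrict measurableSet_Iio, Iio_inter_Ioo, min_eq_left (hK ht.2),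
      setIntegral_const, Real.volume_real_Ioo_of_le ht0, sub_zero, smul_eq_mul, mul_comm]
  have houter : ∀ l, ∫ t, Φ (t, l) ∂μ ≤ 0 := by
    intro l
    have hsup : MeasurableSet {t | l < K t} := measurableSet_lt measurable_const hK.measurable
    have hΦl : (fun t => Φ (t, l)) = {t | l < K t}.indicator (deriv φ) := rfl
    rw [hΦl, MeasureTheory.integral_indicator hsup, Measure.restrict_restrict hsup, inter_comm]
    exact setIntegral_Ioc_inter_deriv_nonpos
      (isUpperSet_setOfPred.2 fun x y hxy h => h.trans_le (hK hxy)) hφ hφ0 hφb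
  calc ∫ t in a..b, deriv φ t * K t = ∫ t, ∫ l, Φ (t, l) ∂ν ∂μ := by
        rw [integral_of_le hab]; exact integral_congr_ae (hinner.mono fun _ h => h.symm)
    _ = ∫ l, ∫ t, Φ (t, l) ∂μ ∂ν := integral_integral_swap hΦ
    _ ≤ 0 := integral_nonpos houter

theorem exists_monotone_nonneg_add_primitive_eq {a b g₀ M : ℝ} {f g : ℝ → ℝ} {S : Set ℝ}
    (hf : IntervalIntegrable f volume a b)
    (hgb : ∀ᵐ t ∂(volume.restrict (Ioo a b)), |g t| ≤ M)
    (hS : S ⊆ Ioo a b) (hSfull : volume (Ioo a b \ S) = 0)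
    (hineq : ∀ s ∈ S, ∀ t ∈ S, s < t → g t - g s + ∫ τ in s..t, f τ ≤ 0)
    (hineq0 : ∀ t ∈ S, g t - g₀ + ∫ τ in a..t, f τ ≤ 0) :
    ∃ K : ℝ → ℝ, Monotone K ∧
      ∀ᵐ t ∂(volume.restrict (Ioo a b)), 0 ≤ K t ∧ g t + (∫ τ in a..t, f τ) + K t = g₀ := by
  set F := fun t => ∫ τ in a..t, f τ
  set s := S ∩ {t | |g t| ≤ M}
  have hsub : ∀ t ∈ s, t ∈ uIcc a b := fun t ht =>
    Ioo_subset_Icc_self.trans Icc_subset_uIcc (hS ht.1)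
  have hfs : ∀ t ∈ s, IntervalIntegrable f volume a t := fun t ht =>
    hf.mono_set (uIcc_subset_uIcc_left (hsub t ht))
  obtain ⟨C, hC⟩ := isCompact_uIcc.exists_bound_of_continuousOn
    (continuousOn_primitive_interval' hf left_mem_uIcc)
  have hmono : MonotoneOn (fun t => g₀ - (g t + F t)) s := by
    intro u hu v hv huv
    rcases huv.eq_or_lt with rfl | huv
    · rfl
    have hFuv : F v - F u = ∫ τ in u..v, f τ := integral_interval_sub_left (hfs v hv) (hfs u hu)
    linarith [hineq u hu.1 v hv.1 huv]
  have hnonneg : ∀ t ∈ s, 0 ≤ g₀ - (g t + F t) := fun t ht => by linarith [hineq0 t ht.1]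
  obtain ⟨K, hK, hKeq⟩ := hmono.exists_monotone_extension
    ⟨0, forall_mem_image.2 hnonneg⟩
    ⟨g₀ + M + C, forall_mem_image.2 fun t ht => by
      have hFt : |F t| ≤ C := by simpa using hC t (hsub t ht)
      linarith [neg_le_of_abs_le (show |g t| ≤ M from ht.2), neg_le_of_abs_le hFt]⟩
  refine ⟨K, hK, ?_⟩
  have hS_ae : ∀ᵐ t ∂(volume.restrict (Ioo a b)), t ∈ S := by
    rw [ae_restrict_iff' measurableSet_Ioo]
    filter_upwards [measure_eq_zero_iff_ae_notMem.1 hSfull] with t ht htI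
    by_contra htS; exact ht ⟨htI, htS⟩
  filter_upwards [hS_ae, hgb] with t htS htg
  have ht : t ∈ s := ⟨htS, htg⟩
  rw [← hKeq ht]
  exact ⟨hnonneg t ht, by ring⟩

theorem stmt7_general (T : ℝ) (hT : 0 < T) (f g : ℝ → ℝ) (g₀ : ℝ)
    (hf : IntegrableOn f (Set.Ioo 0 T))
    (M : ℝ) (hgb : ∀ᵐ t ∂(volume.restrict (Set.Ioo 0 T)), |g t| ≤ M)
    (S : Set ℝ) (hS : S ⊆ Set.Ioo 0 T) (hSfull : volume (Set.Ioo 0 T \ S) = 0)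
    (hineq : ∀ s ∈ S, ∀ t ∈ S, s < t → g t - g s + ∫ τ in Set.Ioo s t, f τ ≤ 0)
    (hineq0 : ∀ t ∈ S, g t - g₀ + ∫ τ in Set.Ioo 0 t, f τ ≤ 0) :
    ∀ φ : ℝ → ℝ, ContDiff ℝ 1 φ → (∀ t, 0 ≤ φ t) →
      (∃ T', T' < T ∧ ∀ t, T' ≤ t → φ t = 0) →
      -(∫ t in Set.Ioo 0 T, deriv φ t * g t) + (∫ t in Set.Ioo 0 T, φ t * f t)
        - φ 0 * g₀ ≤ 0 := by
  rintro φ hφ hφ0 ⟨T', hT'T, hT'⟩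
  have hφT : φ T = 0 := hT' T hT'T.le
  have hIoo : ∀ {u v : ℝ} (h : ℝ → ℝ), u ≤ v → ∫ τ in Ioo u v, h τ = ∫ τ in u..v, h τ :=
    fun h huv => by rw [integral_of_le huv, integral_Ioc_eq_integral_Ioo]
  have hfi : IntervalIntegrable f volume 0 T :=
    (intervalIntegrable_iff_integrableOn_Ioo_of_le hT.le).2 hf
  obtain ⟨K, hK, hKae⟩ := exists_monotone_nonneg_add_primitive_eq hfi hgb hS hSfull
    (fun s hs t ht hst => hIoo f hst.le ▸ hineq s hs t ht hst)
    (fun t ht => hIoo f (hS ht).1.le ▸ hineq0 t ht)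
  rw [Measure.restrict_congr_set Ioo_ae_eq_Ioc] at hKae
  have hφ' : Continuous (deriv φ) := hφ.continuous_deriv le_rfl
  have hiC : IntervalIntegrable (fun t => deriv φ t * g₀) volume 0 T :=
    (hφ'.mul continuous_const).intervalIntegrable _ _
  have hiK : IntervalIntegrable (fun t => deriv φ t * K t) volume 0 T :=
    hK.intervalIntegrable.continuousOn_mul hφ'.continuousOn
  have hiF : IntervalIntegrable (fun t => deriv φ t * ∫ τ in 0..t, f τ) volume 0 T :=
    (hφ'.continuousOn.mul (continuousOn_primitive_interval' hfi left_mem_uIcc)).intervalIntegrable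
  have hg : ∫ t in 0..T, deriv φ t * g t = (∫ t in 0..T, deriv φ t * g₀)
      - (∫ t in 0..T, deriv φ t * K t) - ∫ t in 0..T, deriv φ t * ∫ τ in 0..t, f τ := by
    rw [← intervalIntegral.integral_sub hiC hiK, ← intervalIntegral.integral_sub (hiC.sub hiK) hiF,
      integral_of_le hT.le, integral_of_le hT.le]
    exact integral_congr_ae (hKae.mono fun t ht => by rw [← ht.2]; ring)
  rw [hIoo _ hT.le, hIoo _ hT.le, hg, intervalIntegral.integral_mul_const,
    hφ.integral_deriv_eq_sub, integral_deriv_mul_primitive hφ hfi, hφT]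
  linarith [integral_deriv_mul_nonpos_of_monotone hT.le hφ (fun t _ => hφ0 t) hφT hK
    (hKae.mono fun t ht => ht.1)]

/-- Deterministic Lemma 2.1, direction ii ⇒ i: if `g(t) - g(s) + ∫ₛᵗ f ≤ 0` holds for
almost every `0 < s < t < T` and for `s = 0` with `g₀`, then the variational inequality
holds for all nonnegative `φ ∈ C¹_c([0,T))`. -/
theorem stmt7 (T : ℝ) (hT : 0 < T) (f g : ℝ → ℝ) (g₀ : ℝ)
    (hf : IntegrableOn f (Set.Ioo 0 T))
    (M : ℝ) (hgb : ∀ᵐ t ∂(volume.restrict (Set.Ioo 0 T)), |g t| ≤ M)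
    (hgm : AEStronglyMeasurable g (volume.restrict (Set.Ioo 0 T)))
    (S : Set ℝ) (hS : S ⊆ Set.Ioo 0 T) (hSfull : volume (Set.Ioo 0 T \ S) = 0)
    (hineq : ∀ s ∈ S, ∀ t ∈ S, s < t → g t - g s + ∫ τ in Set.Ioo s t, f τ ≤ 0)
    (hineq0 : ∀ t ∈ S, g t - g₀ + ∫ τ in Set.Ioo 0 t, f τ ≤ 0) :
    ∀ φ : ℝ → ℝ, ContDiff ℝ 1 φ → (∀ t, 0 ≤ φ t) →
      (∃ T', T' < T ∧ ∀ t, T' ≤ t → φ t = 0) →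
      -(∫ t in Set.Ioo 0 T, deriv φ t * g t) + (∫ t in Set.Ioo 0 T, φ t * f t)
        - φ 0 * g₀ ≤ 0 :=
  stmt7_general T hT f g g₀ hf M hgb S hS hSfull hineq hineq0
end

section
/- Let g : [0,T] → ℝ satisfy g(t) − g(s) + ∫ₛᵗ f(τ) dτ ≤ 0 for a.e. s < t with f ∈ L¹(0,T). Then the function t ↦ g(t) + ∫₀ᵗ f(τ) dτ is a.e. equal to a non-increasing function; in particular g has a representative which is the sum of a non-increasing function and a continuous function, hence admits a càdlàg representative. -/
/-!
With `F` a continuous primitive of `f`, the hypothesis says that `h := g + F` is non-increasing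
on the full-measure set `S`. Its envelope `G t := sup {h s | s ∈ S, s > t}` is non-increasing
and right-continuous on `(0, T)`, and it agrees with `h` on `S` outside a countable set, because
the gaps `(G t, h t)` at the points of disagreement are pairwise disjoint open intervals. Then
`G - F` is the required càdlàg representative of `g`.
-/

open MeasureTheory Set Filter Topology

noncomputable def rightSup {α β : Type*} [LinearOrder α] [ConditionallyCompleteLinearOrder β]
    (φ : α → β) (S : Set α) (t : α) : β :=
  sSup (φ '' (S ∩ Ioi t))

section RightSup

variable {α β : Type*} [LinearOrder α] [ConditionallyCompleteLinearOrder β] {φ : α → β}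
  {S : Set α} {s t : α}

lemma rightSup_le_rightSup (hst : s ≤ t) (hbdd : BddAbove (φ '' (S ∩ Ioi s)))
    (hne : (S ∩ Ioi t).Nonempty) : rightSup φ S t ≤ rightSup φ S s :=
  csSup_le_csSup hbdd (hne.image φ) (image_mono (inter_subset_inter_right _ (Ioi_subset_Ioi hst)))

lemma antitoneOn_rightSup {I : Set α} (hbdd : ∀ t ∈ I, BddAbove (φ '' (S ∩ Ioi t)))
    (hne : ∀ t ∈ I, (S ∩ Ioi t).Nonempty) : AntitoneOn (rightSup φ S) I :=
  fun _ hs _ ht hst => rightSup_le_rightSup hst (hbdd _ hs) (hne _ ht)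

lemma tendsto_rightSup_nhdsGT [TopologicalSpace α] [OrderTopology α] [TopologicalSpace β]
    [OrderTopology β] (hbdd : BddAbove (φ '' (S ∩ Ioi t))) (hne : (S ∩ Ioi t).Nonempty) :
    Tendsto (rightSup φ S) (𝓝[>] t) (𝓝 (rightSup φ S t)) := by
  refine tendsto_order.2 ⟨fun a ha => ?_, fun b hb => ?_⟩
  · obtain ⟨_, ⟨s, ⟨hs, hts⟩, rfl⟩, has⟩ := exists_lt_of_lt_csSup (hne.image φ) ha
    filter_upwards [Ioo_mem_nhdsGT hts] with u hu
    have hbdd_u : BddAbove (φ '' (S ∩ Ioi u)) :=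
      hbdd.mono (image_mono (inter_subset_inter_right _ (Ioi_subset_Ioi hu.1.le)))
    exact has.trans_le (le_csSup hbdd_u ⟨s, ⟨hs, hu.2⟩, rfl⟩)
  · obtain ⟨s, hs, hts⟩ := hne
    filter_upwards [Ioo_mem_nhdsGT hts] with u hu
    exact (rightSup_le_rightSup hu.1.le hbdd ⟨s, hs, hu.2⟩).trans_lt hb

lemma AntitoneOn.bddAbove_image_inter_Ioi (hφ : AntitoneOn φ S) (hs : s ∈ S) (hst : s ≤ t) :
    BddAbove (φ '' (S ∩ Ioi t)) := by
  refine ⟨φ s, ?_⟩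
  rintro _ ⟨u, ⟨hu, htu⟩, rfl⟩
  exact hφ hs hu (hst.trans htu.le)

lemma AntitoneOn.rightSup_le (hφ : AntitoneOn φ S) (ht : t ∈ S) (hne : (S ∩ Ioi t).Nonempty) :
    rightSup φ S t ≤ φ t := by
  refine csSup_le (hne.image φ) ?_
  rintro _ ⟨u, ⟨hu, htu⟩, rfl⟩
  exact hφ ht hu htu.le

lemma AntitoneOn.le_rightSup (hφ : AntitoneOn φ S) (hs : s ∈ S) (ht : t ∈ S) (hst : s < t) :
    φ t ≤ rightSup φ S s :=
  le_csSup (hφ.bddAbove_image_inter_Ioi hs le_rfl) ⟨t, ⟨ht, hst⟩, rfl⟩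

lemma AntitoneOn.countable_rightSup_ne [TopologicalSpace β] [OrderTopology β]
    [DenselyOrdered β] [TopologicalSpace.SeparableSpace β] (hφ : AntitoneOn φ S)
    (hne : ∀ t ∈ S, (S ∩ Ioi t).Nonempty) :
    {t ∈ S | rightSup φ S t ≠ φ t}.Countable := by
  have hgap : ∀ s ∈ S, ∀ t ∈ S, s < t →
      Disjoint (Ioo (rightSup φ S s) (φ s)) (Ioo (rightSup φ S t) (φ t)) := by
    intro s hs t ht hst
    refine disjoint_left.2 fun x hxs hxt => ?_
    exact (hxt.2.trans_le (hφ.le_rightSup hs ht hst)).not_gt hxs.1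
  refine PairwiseDisjoint.countable_of_isOpen (s := fun t => Ioo (rightSup φ S t) (φ t))
    ?_ (fun _ _ => isOpen_Ioo) ?_
  · intro s hs t ht hst
    rcases hst.lt_or_gt with hlt | hlt
    · exact hgap s hs.1 t ht.1 hlt
    · exact (hgap t ht.1 s hs.1 hlt).symm
  · rintro t ⟨ht, hne_t⟩
    exact nonempty_Ioo.2 ((hφ.rightSup_le ht (hne t ht)).lt_of_ne hne_t)

end RightSup

lemma inter_nonempty_of_measure_diff_eq_zero {X : Type*} [TopologicalSpace X] [MeasurableSpace X]
    (μ : Measure X) [μ.IsOpenPosMeasure] {I S U : Set X} (hS : μ (I \ S) = 0) (hU : IsOpen U)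
    (hUne : U.Nonempty) (hUI : U ⊆ I) : (S ∩ U).Nonempty := by
  by_contra hempty
  have hUS : U ⊆ I \ S := fun x hx => ⟨hUI hx, fun hxS => hempty ⟨x, hxS, hx⟩⟩
  exact hU.measure_ne_zero μ hUne (measure_mono_null hUS hS)

lemma ae_restrict_mem_of_measure_diff_eq_zero {X : Type*} [MeasurableSpace X] {μ : Measure X}
    {I S : Set X} (hI : MeasurableSet I) (hS : μ (I \ S) = 0) : ∀ᵐ x ∂μ.restrict I, x ∈ S := by
  rw [ae_restrict_iff' hI, ae_iff]
  simp only [Classical.not_imp]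
  exact hS

lemma AntitoneOn.exists_tendsto_nhdsLT {β : Type*} [ConditionallyCompleteLinearOrder β]
    [TopologicalSpace β] [OrderTopology β] {G : ℝ → β} {a b t : ℝ} (hG : AntitoneOn G (Ioo a b))
    (ht : t ∈ Ioo a b) : ∃ L, Tendsto G (𝓝[<] t) (𝓝 L) := by
  have hbdd : BddBelow (G '' Ioo a t) := by
    refine ⟨G t, ?_⟩
    rintro _ ⟨u, hu, rfl⟩
    exact hG ⟨hu.1, hu.2.trans ht.2⟩ ht hu.2.le
  exact ⟨_, (hG.mono (Ioo_subset_Ioo_right ht.2.le)).tendsto_nhdsWithin_Ioo_left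
    (nonempty_Ioo.2 ht.1) hbdd⟩

lemma AntitoneOn.exists_rightContinuous_ae_eq {a b : ℝ} {φ : ℝ → ℝ} {S : Set ℝ}
    (hφ : AntitoneOn φ S) (hS : S ⊆ Ioo a b) (hSfull : volume (Ioo a b \ S) = 0) :
    ∃ G : ℝ → ℝ, AntitoneOn G (Ioo a b) ∧ (∀ t ∈ Ioo a b, Tendsto G (𝓝[>] t) (𝓝 (G t))) ∧
      ∀ᵐ t ∂(volume.restrict (Ioo a b)), G t = φ t := by
  have hdense : ∀ u v, a ≤ u → u < v → v ≤ b → (S ∩ Ioo u v).Nonempty := fun u v hu huv hv =>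
    inter_nonempty_of_measure_diff_eq_zero volume hSfull isOpen_Ioo (nonempty_Ioo.2 huv)
      (Ioo_subset_Ioo hu hv)
  have hne : ∀ t ∈ Ioo a b, (S ∩ Ioi t).Nonempty := fun t ht =>
    (hdense t b ht.1.le ht.2 le_rfl).mono (inter_subset_inter_right _ Ioo_subset_Ioi_self)
  have hbdd : ∀ t ∈ Ioo a b, BddAbove (φ '' (S ∩ Ioi t)) := fun t ht => by
    obtain ⟨s, hs, hst⟩ := hdense a t le_rfl ht.1 ht.2.le
    exact hφ.bddAbove_image_inter_Ioi hs hst.2.le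
  refine ⟨rightSup φ S, antitoneOn_rightSup hbdd hne,
    fun t ht => tendsto_rightSup_nhdsGT (hbdd t ht) (hne t ht), ?_⟩
  have hcount := hφ.countable_rightSup_ne fun t ht => hne t (hS ht)
  filter_upwards [ae_restrict_mem_of_measure_diff_eq_zero measurableSet_Ioo hSfull,
    ae_restrict_of_ae (hcount.ae_notMem volume)] with t htS ht
  simpa [htS] using ht

lemma intervalIntegral_indicator_Ioo {E : Type*} [NormedAddCommGroup E] [NormedSpace ℝ E]
    {f : ℝ → E} {a b s t : ℝ} (has : a ≤ s) (hst : s ≤ t) (htb : t < b) :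
    ∫ x in s..t, (Ioo a b).indicator f x = ∫ x in Ioo s t, f x := by
  have hsub : Ioc s t ⊆ Ioo a b := fun x hx => ⟨has.trans_lt hx.1, hx.2.trans_lt htb⟩
  rw [intervalIntegral.integral_of_le hst, setIntegral_indicator measurableSet_Ioo,
    inter_eq_left.2 hsub, integral_Ioc_eq_integral_Ioo]

lemma setIntegral_Ioo_eq_sub_primitive {E : Type*} [NormedAddCommGroup E] [NormedSpace ℝ E]
    {f : ℝ → E} {a b s t : ℝ} (hf : IntegrableOn f (Ioo a b)) (has : a ≤ s) (hst : s ≤ t)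
    (htb : t < b) :
    ∫ x in Ioo s t, f x =
      (∫ x in a..t, (Ioo a b).indicator f x) - ∫ x in a..s, (Ioo a b).indicator f x := by
  have hfI : Integrable ((Ioo a b).indicator f) := (integrable_indicator_iff measurableSet_Ioo).2 hf
  rw [← intervalIntegral_indicator_Ioo has hst htb,
    intervalIntegral.integral_interval_sub_left hfI.intervalIntegrable hfI.intervalIntegrable]

theorem stmt8_general (T : ℝ) (f g : ℝ → ℝ)
    (hf : IntegrableOn f (Set.Ioo 0 T))
    (S : Set ℝ) (hS : S ⊆ Set.Ioo 0 T) (hSfull : volume (Set.Ioo 0 T \ S) = 0)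
    (hineq : ∀ s ∈ S, ∀ t ∈ S, s < t → g t - g s + ∫ τ in Set.Ioo s t, f τ ≤ 0) :
    (∃ G : ℝ → ℝ, AntitoneOn G (Set.Ioo 0 T) ∧
      ∀ᵐ t ∂(volume.restrict (Set.Ioo 0 T)), g t + (∫ τ in Set.Ioo 0 t, f τ) = G t) ∧
    (∃ gt : ℝ → ℝ, (∀ᵐ t ∂(volume.restrict (Set.Ioo 0 T)), gt t = g t) ∧
      (∀ t ∈ Set.Ioo 0 T, Filter.Tendsto gt (nhdsWithin t (Set.Ioi t)) (nhds (gt t))) ∧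
      (∀ t ∈ Set.Ioo 0 T, ∃ L, Filter.Tendsto gt (nhdsWithin t (Set.Iio t)) (nhds L))) := by
  set F : ℝ → ℝ := fun t => ∫ x in 0..t, (Ioo 0 T).indicator f x
  have hFc : Continuous F :=
    ((integrable_indicator_iff measurableSet_Ioo).2 hf).continuous_primitive 0
  have hF : ∀ s t, 0 ≤ s → s ≤ t → t < T → ∫ τ in Ioo s t, f τ = F t - F s :=
    fun s t hs hst htT => setIntegral_Ioo_eq_sub_primitive hf hs hst htT
  have hanti : AntitoneOn (g + F) S := by
    intro s hs t ht hst
    rcases hst.eq_or_lt with rfl | hlt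
    · rfl
    have := hineq s hs t ht hlt
    rw [hF s t (hS hs).1.le hst (hS ht).2] at this
    simp only [Pi.add_apply]
    linarith
  obtain ⟨G, hGanti, hGright, hGae⟩ := hanti.exists_rightContinuous_ae_eq hS hSfull
  refine ⟨⟨G, hGanti, ?_⟩, ⟨G - F, ?_, fun t ht => ?_, fun t ht => ?_⟩⟩
  · filter_upwards [hGae, ae_restrict_mem measurableSet_Ioo] with t hGt ht
    have hF0 : F 0 = 0 := intervalIntegral.integral_same
    rw [hGt, hF 0 t le_rfl ht.1.le ht.2, hF0, sub_zero, Pi.add_apply]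
  · filter_upwards [hGae] with t hGt
    simp [hGt]
  · exact (hGright t ht).sub hFc.continuousWithinAt
  · obtain ⟨L, hL⟩ := hGanti.exists_tendsto_nhdsLT ht
    exact ⟨L - F t, hL.sub (hFc.tendsto t |>.mono_left nhdsWithin_le_nhds)⟩

/-- If `g(t) - g(s) + ∫ₛᵗ f ≤ 0` for a.e. `s < t` with `f ∈ L¹(0,T)`, then
`t ↦ g(t) + ∫₀ᵗ f` agrees a.e. with a non-increasing function; in particular `g` admits a
representative which is the sum of a non-increasing and a continuous function, hence a
càdlàg representative. -/
theorem stmt8 (T : ℝ) (hT : 0 < T) (f g : ℝ → ℝ)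
    (hf : IntegrableOn f (Set.Ioo 0 T))
    (S : Set ℝ) (hS : S ⊆ Set.Ioo 0 T) (hSfull : volume (Set.Ioo 0 T \ S) = 0)
    (hineq : ∀ s ∈ S, ∀ t ∈ S, s < t → g t - g s + ∫ τ in Set.Ioo s t, f τ ≤ 0) :
    (∃ G : ℝ → ℝ, AntitoneOn G (Set.Ioo 0 T) ∧
      ∀ᵐ t ∂(volume.restrict (Set.Ioo 0 T)), g t + (∫ τ in Set.Ioo 0 t, f τ) = G t) ∧
    (∃ gt : ℝ → ℝ, (∀ᵐ t ∂(volume.restrict (Set.Ioo 0 T)), gt t = g t) ∧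
      (∀ t ∈ Set.Ioo 0 T, Filter.Tendsto gt (nhdsWithin t (Set.Ioi t)) (nhds (gt t))) ∧
      (∀ t ∈ Set.Ioo 0 T, ∃ L, Filter.Tendsto gt (nhdsWithin t (Set.Iio t)) (nhds L))) :=
  stmt8_general T f g hf S hS hSfull hineq
end
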